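/- Let 0 < α₀ < 1, n ≥ 1, and let v : (0,α₀] × ℝ^n → ℝ be measurable. Fix x ∈ ℝ^n and suppose there exist r > 0 and constants c₁, c₂ ≥ 0 such that: (a) |v(α,y)| ≤ c₁ for all α ∈ (0,α₀] and all y in the closed ball B_x(r) = {y : |x−y| ≤ r}; (b) ∫_{ℝ^n \ B_x(r)} |v(α,y)| |x−y|^{2−n} dy ≤ c₂ for all α ∈ (0,α₀]; and (c) v(α,y) → v₀ as (α,y) → (0,x) with α ∈ (0,α₀]. Then the generalized Riesz potential V_α(x) = (1/γ_n(α)) ∫_{ℝ^n} v(α,y) |x−y|^{α−n} dy converges to v₀ as α → 0⁺, where γ_n(α) = 2^α π^{n/2} Γ(α/2)/Γ((n−α)/2). -/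

import Mathlib

open MeasureTheory Filter Real Metric

noncomputable section

/-- The normalizing constant `γ_n(α) = 2^α π^{n/2} Γ(α/2) / Γ((n-α)/2)` of the Riesz
potential. -/
def rieszGamma (n : ℕ) (α : ℝ) : ℝ :=
  (2 : ℝ) ^ α * π ^ ((n : ℝ) / 2) * Real.Gamma (α / 2) / Real.Gamma ((n - α) / 2)

open scoped ENNReal Topology

section Aux

open Set
open scoped ENNReal Topology

variable {E : Type*} [NormedAddCommGroup E] [NormedSpace ℝ E] [MeasurableSpace E]
  [BorelSpace E] [FiniteDimensional ℝ E] [Nontrivial E]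

theorem aux_lintegral_fun_norm_addHaar (μ : Measure E) [μ.IsAddHaarMeasure]
    (f : ℝ → ℝ≥0∞) (hf : Measurable f) :
    ∫⁻ x, f ‖x‖ ∂μ = (Module.finrank ℝ E) * μ (ball 0 1) *
      ∫⁻ r in Set.Ioi (0 : ℝ), ENNReal.ofReal (r ^ (Module.finrank ℝ E - 1)) * f r := by
  have h0 : μ.restrict ({(0 : E)}ᶜ) = μ := by
    rw [Measure.restrict_congr_set (t := Set.univ), Measure.restrict_univ]
    rw [ae_eq_univ, compl_compl]
    exact measure_singleton 0
  calc ∫⁻ x, f ‖x‖ ∂μ = ∫⁻ x, f ‖x‖ ∂(μ.restrict {(0:E)}ᶜ) := by rw [h0]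
    _ = ∫⁻ x : ({(0:E)}ᶜ : Set E), f ‖x.1‖ ∂(μ.comap (↑)) :=
        (lintegral_subtype_comap (measurableSet_singleton _).compl _).symm
    _ = ∫⁻ p : sphere (0:E) 1 × Set.Ioi (0:ℝ), f p.2
          ∂(μ.toSphere.prod (.volumeIoiPow (Module.finrank ℝ E - 1))) :=
        by have := μ.measurePreserving_homeomorphUnitSphereProd.lintegral_comp_emb
            (Homeomorph.measurableEmbedding _) (fun p => f p.2)
           simpa only [homeomorphUnitSphereProd_apply_snd_coe] using this
    _ = μ.toSphere Set.univ * ∫⁻ r, f r ∂(Measure.volumeIoiPow (Module.finrank ℝ E - 1)) := by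
        rw [lintegral_prod _ (by fun_prop)]
        simp [lintegral_const, mul_comm]
    _ = (Module.finrank ℝ E) * μ (ball 0 1) * ∫⁻ r in Set.Ioi (0:ℝ),
          ENNReal.ofReal (r ^ (Module.finrank ℝ E - 1)) * f r := by
        rw [Measure.toSphere_apply_univ, Measure.volumeIoiPow,
          lintegral_withDensity_eq_lintegral_mul _ (by fun_prop) (by fun_prop)]
        simp only [Pi.mul_apply]
        rw [lintegral_subtype_comap measurableSet_Ioi
          (fun r => ENNReal.ofReal (r ^ (Module.finrank ℝ E - 1)) * f r)]

variable {n : ℕ}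

theorem aux_ball_lintegral (hn : 1 ≤ n) (x : EuclideanSpace ℝ (Fin n)) {α s : ℝ}
    (hα : 0 < α) (hαn : α < n) (hs : 0 < s) :
    ∫⁻ y in closedBall x s, ENNReal.ofReal (dist x y ^ (α - n)) =
      (n : ℝ≥0∞) * volume (ball (0 : EuclideanSpace ℝ (Fin n)) 1) *
        ENNReal.ofReal (s ^ α / α) := by
  haveI : Nonempty (Fin n) := ⟨⟨0, hn⟩⟩
  set f : ℝ → ℝ≥0∞ := fun t => ENNReal.ofReal ((Set.Ioc (0:ℝ) s).indicator (fun t => t ^ (α - n)) t) with hf_def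
  have hne : α - (n:ℝ) ≠ 0 := by
    have : α < (n:ℝ) := hαn
    linarith
  have hf : Measurable f := by
    apply Measurable.ennreal_ofReal
    exact Measurable.indicator (by fun_prop) measurableSet_Ioc
  -- pointwise identification
  have key : ∀ y : EuclideanSpace ℝ (Fin n), (closedBall x s).indicator
      (fun y => ENNReal.ofReal (dist x y ^ (α - n))) y = f (dist x y) := by
    intro y
    by_cases hmem : y ∈ closedBall x s
    · rw [Set.indicator_of_mem hmem]
      rcases eq_or_ne y x with rfl | hyx
      · have h1 : dist y y = 0 := dist_self y
        rw [hf_def]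
        simp only [h1, Real.zero_rpow hne, ENNReal.ofReal_zero,
          Set.indicator_of_notMem (by simp : (0:ℝ) ∉ Set.Ioc (0:ℝ) s)]
      · have hd : 0 < dist x y := dist_pos.2 (Ne.symm hyx)
        have hle : dist x y ≤ s := by rw [dist_comm]; exact mem_closedBall.1 hmem
        have : dist x y ∈ Set.Ioc (0:ℝ) s := ⟨hd, hle⟩
        rw [hf_def]; simp only [Set.indicator_of_mem this]
    · rw [Set.indicator_of_notMem hmem]
      have : dist x y ∉ Set.Ioc (0:ℝ) s := by
        rw [mem_closedBall] at hmem
        intro h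
        exact hmem (by rw [dist_comm] at h; exact h.2)
      rw [hf_def]; simp [Set.indicator_of_notMem this]
  have hdim : Module.finrank ℝ (EuclideanSpace ℝ (Fin n)) = n := finrank_euclideanSpace_fin
  calc ∫⁻ y in closedBall x s, ENNReal.ofReal (dist x y ^ (α - n))
      = ∫⁻ y, f (dist x y) := by
        rw [← lintegral_indicator measurableSet_closedBall]
        exact lintegral_congr key
    _ = ∫⁻ y : EuclideanSpace ℝ (Fin n), f ‖y‖ := by
        have hmp : MeasurePreserving (fun y : EuclideanSpace ℝ (Fin n) => y - x) volume volume :=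
          measurePreserving_sub_right volume x
        have heq : ∀ y : EuclideanSpace ℝ (Fin n), f (dist x y) = f ‖y - x‖ := by
          intro y; rw [dist_eq_norm, norm_sub_rev]
        simp_rw [heq]
        exact hmp.lintegral_comp (hf.comp measurable_norm)
    _ = (n : ℝ≥0∞) * volume (ball (0 : EuclideanSpace ℝ (Fin n)) 1) *
          ∫⁻ r in Set.Ioi (0:ℝ), ENNReal.ofReal (r ^ (n - 1)) * f r := by
        rw [aux_lintegral_fun_norm_addHaar volume f hf, hdim]
    _ = (n : ℝ≥0∞) * volume (ball (0 : EuclideanSpace ℝ (Fin n)) 1) * ENNReal.ofReal (s ^ α / α) := by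
        congr 1
        calc ∫⁻ r in Set.Ioi (0:ℝ), ENNReal.ofReal (r ^ (n - 1)) * f r
            = ∫⁻ r in Set.Ioi (0:ℝ),
                (Set.Ioc (0:ℝ) s).indicator (fun r => ENNReal.ofReal (r ^ (α - 1))) r := by
              apply setLIntegral_congr_fun measurableSet_Ioi
              intro r hr
              have hr0 : (0:ℝ) < r := hr
              by_cases hrs : r ∈ Set.Ioc (0:ℝ) s
              · rw [Set.indicator_of_mem hrs, hf_def]
                simp only [Set.indicator_of_mem hrs]
                rw [← ENNReal.ofReal_mul (by positivity)]
                congr 1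
                rw [← Real.rpow_natCast r (n - 1), ← Real.rpow_add hr0]
                congr 1
                rw [Nat.cast_sub hn]
                push_cast; ring
              · rw [Set.indicator_of_notMem hrs, hf_def]
                simp [Set.indicator_of_notMem hrs]
          _ = ∫⁻ r in Set.Ioc (0:ℝ) s, ENNReal.ofReal (r ^ (α - 1)) := by
              rw [lintegral_indicator measurableSet_Ioc,
                Measure.restrict_restrict measurableSet_Ioc,
                Set.inter_eq_left.2 (fun r hr => hr.1)]
          _ = ENNReal.ofReal (∫ r in Set.Ioc (0:ℝ) s, r ^ (α - 1)) := by
              rw [← ofReal_integral_eq_lintegral_ofReal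
                ((intervalIntegral.intervalIntegrable_rpow' (by linarith)).1)]
              filter_upwards [ae_restrict_mem measurableSet_Ioc] with r hr
              exact Real.rpow_nonneg hr.1.le _
          _ = ENNReal.ofReal (s ^ α / α) := by
              rw [← intervalIntegral.integral_of_le hs.le,
                integral_rpow (Or.inl (by linarith))]
              have h1 : α - 1 + 1 = α := by ring
              rw [h1, Real.zero_rpow hα.ne', sub_zero]

theorem aux_ball_weight_integrableOn (hn : 1 ≤ n) (x : EuclideanSpace ℝ (Fin n)) {α s : ℝ}
    (hα : 0 < α) (hαn : α < n) (hs : 0 < s) :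
    IntegrableOn (fun y => dist x y ^ (α - n)) (closedBall x s) volume := by
  constructor
  · exact ((Measurable.aestronglyMeasurable (by fun_prop : Measurable (fun y : EuclideanSpace ℝ (Fin n) => dist x y ^ (α - (n:ℝ)))))).restrict
  · rw [hasFiniteIntegral_iff_ofReal (ae_of_all _ fun y => Real.rpow_nonneg dist_nonneg _)]
    rw [aux_ball_lintegral hn x hα hαn hs]
    exact ENNReal.mul_lt_top
      (ENNReal.mul_lt_top (ENNReal.natCast_lt_top n) measure_ball_lt_top)
      ENNReal.ofReal_lt_top

theorem aux_ball_weight_integral (hn : 1 ≤ n) (x : EuclideanSpace ℝ (Fin n)) {α s : ℝ}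
    (hα : 0 < α) (hαn : α < n) (hs : 0 < s) :
    ∫ y in closedBall x s, dist x y ^ (α - n) =
      (n * (volume (ball (0 : EuclideanSpace ℝ (Fin n)) 1)).toReal) * (s ^ α / α) := by
  rw [integral_eq_lintegral_of_nonneg_ae (ae_of_all _ fun y => Real.rpow_nonneg dist_nonneg _)
    ((Measurable.aestronglyMeasurable (by fun_prop : Measurable (fun y : EuclideanSpace ℝ (Fin n) => dist x y ^ (α - (n:ℝ)))))).restrict,
    aux_ball_lintegral hn x hα hαn hs]
  rw [ENNReal.toReal_mul, ENNReal.toReal_mul,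
    ENNReal.toReal_ofReal (by positivity)]
  simp

lemma aux_gamma_half_pos (hn : 1 ≤ n) : 0 < Real.Gamma ((n:ℝ)/2) :=
  Real.Gamma_pos_of_pos (by positivity)

lemma aux_K_eq (hn : 1 ≤ n) :
    (n : ℝ) * (volume (ball (0 : EuclideanSpace ℝ (Fin n)) 1)).toReal
      = 2 * π ^ ((n:ℝ)/2) / Real.Gamma ((n:ℝ)/2) := by
  haveI : Nonempty (Fin n) := ⟨⟨0, hn⟩⟩
  have hΓ : 0 < Real.Gamma ((n:ℝ)/2) := aux_gamma_half_pos hn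
  have hΓ1 : Real.Gamma ((n:ℝ)/2 + 1) = ((n:ℝ)/2) * Real.Gamma ((n:ℝ)/2) :=
    Real.Gamma_add_one (by positivity)
  have hsq : Real.sqrt π ^ n = π ^ ((n:ℝ)/2) := by
    rw [Real.sqrt_eq_rpow, ← Real.rpow_natCast (π ^ ((1:ℝ)/2)) n, ← Real.rpow_mul pi_nonneg]
    congr 1; ring
  have hvol : (volume (ball (0 : EuclideanSpace ℝ (Fin n)) 1)).toReal
      = π ^ ((n:ℝ)/2) / Real.Gamma ((n:ℝ)/2 + 1) := by
    rw [EuclideanSpace.volume_ball, Fintype.card_fin, hsq]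
    rw [ENNReal.toReal_mul, ← ENNReal.ofReal_pow (by norm_num), ENNReal.toReal_ofReal (by norm_num),
      ENNReal.toReal_ofReal (by positivity)]
    rw [one_pow, one_mul]
  rw [hvol, hΓ1]
  have hn0 : (n:ℝ) ≠ 0 := by positivity
  field_simp

lemma aux_rieszGamma_pos (hn : 1 ≤ n) {α : ℝ} (h : α ∈ Set.Ioo (0:ℝ) 1) :
    0 < rieszGamma n α := by
  have h1 : (1:ℝ) ≤ n := by exact_mod_cast hn
  have hΓ1 : 0 < Real.Gamma (α/2) := Real.Gamma_pos_of_pos (by linarith [h.1])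
  have hΓ2 : 0 < Real.Gamma (((n:ℝ) - α)/2) := Real.Gamma_pos_of_pos (by
    have := h.2; linarith)
  have h2 : (0:ℝ) < 2 ^ α := Real.rpow_pos_of_pos two_pos α
  have h3 : (0:ℝ) < π ^ ((n:ℝ)/2) := Real.rpow_pos_of_pos pi_pos _
  unfold rieszGamma
  positivity

lemma aux_continuousAt_gammafactor (hn : 1 ≤ n) :
    ContinuousAt (fun α : ℝ => Real.Gamma (((n:ℝ) - α)/2)) 0 := by
  have h1 : (1:ℝ) ≤ n := by exact_mod_cast hn
  have hout : ContinuousAt Real.Gamma (((n:ℝ) - 0)/2) := by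
    refine (Real.differentiableAt_Gamma ?_).continuousAt
    intro m heq
    have hm : (0:ℝ) ≤ (m:ℝ) := m.cast_nonneg
    nlinarith
  have hin : ContinuousAt (fun α : ℝ => ((n:ℝ) - α)/2) 0 :=
    ((continuous_const.sub continuous_id).div_const 2).continuousAt
  simpa [Function.comp_def] using ContinuousAt.comp (f := fun α : ℝ => ((n:ℝ) - α)/2) hout hin

lemma aux_continuousAt_gammafactor2 :
    ContinuousAt (fun α : ℝ => Real.Gamma (α/2 + 1)) 0 := by
  have hout : ContinuousAt Real.Gamma ((0:ℝ)/2 + 1) := by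
    refine (Real.differentiableAt_Gamma ?_).continuousAt
    intro m heq
    have hm : (0:ℝ) ≤ (m:ℝ) := m.cast_nonneg
    norm_num at heq
    nlinarith
  have hin : ContinuousAt (fun α : ℝ => α/2 + 1) 0 :=
    ((continuous_id.div_const 2).add continuous_const).continuousAt
  simpa [Function.comp_def] using ContinuousAt.comp (f := fun α : ℝ => α/2 + 1) hout hin

lemma aux_continuousAt_denom (n : ℕ) :
    ContinuousAt (fun α : ℝ => (2:ℝ) ^ (α + 1) * π ^ ((n:ℝ)/2) * Real.Gamma (α/2 + 1)) 0 := by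
  refine ContinuousAt.mul (ContinuousAt.mul ?_ continuousAt_const) aux_continuousAt_gammafactor2
  have hin : ContinuousAt (fun α : ℝ => α + 1) 0 :=
    (continuous_id.add continuous_const).continuousAt
  simpa [Function.comp_def] using (Real.continuousAt_const_rpow two_ne_zero).comp hin

lemma aux_denom_zero_ne (n : ℕ) :
    (2:ℝ) ^ ((0:ℝ) + 1) * π ^ ((n:ℝ)/2) * Real.Gamma ((0:ℝ)/2 + 1) ≠ 0 := by
  have h3 : (0:ℝ) < π ^ ((n:ℝ)/2) := Real.rpow_pos_of_pos pi_pos _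
  norm_num [Real.Gamma_one]
  positivity

lemma aux_one_div_riesz_eq (hn : 1 ≤ n) {α : ℝ} (h : α ∈ Set.Ioo (0:ℝ) 1) :
    1 / rieszGamma n α =
      α * Real.Gamma (((n:ℝ) - α)/2) /
        ((2:ℝ) ^ (α + 1) * π ^ ((n:ℝ)/2) * Real.Gamma (α/2 + 1)) := by
  have h1 : (1:ℝ) ≤ n := by exact_mod_cast hn
  have hΓ1 : 0 < Real.Gamma (α/2) := Real.Gamma_pos_of_pos (by linarith [h.1])
  have hΓ2 : 0 < Real.Gamma (((n:ℝ) - α)/2) := Real.Gamma_pos_of_pos (by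
    have := h.2; linarith)
  have h2 : (0:ℝ) < 2 ^ α := Real.rpow_pos_of_pos two_pos α
  have h3 : (0:ℝ) < π ^ ((n:ℝ)/2) := Real.rpow_pos_of_pos pi_pos _
  have hα : 0 < α := h.1
  have hadd : Real.Gamma (α/2 + 1) = (α/2) * Real.Gamma (α/2) :=
    Real.Gamma_add_one (by positivity)
  have h2p : (2:ℝ) ^ (α + 1) = 2 ^ α * 2 := by
    rw [Real.rpow_add two_pos, Real.rpow_one]
  rw [rieszGamma, hadd, h2p]
  field_simp

lemma aux_tendsto_one_div_rieszGamma (hn : 1 ≤ n) :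
    Tendsto (fun α : ℝ => 1 / rieszGamma n α) (𝓝[>] (0:ℝ)) (𝓝 0) := by
  have hc : ContinuousAt (fun α : ℝ =>
      α * Real.Gamma (((n:ℝ) - α)/2) /
        ((2:ℝ) ^ (α + 1) * π ^ ((n:ℝ)/2) * Real.Gamma (α/2 + 1))) 0 :=
    (continuousAt_id.mul (aux_continuousAt_gammafactor hn)).div (aux_continuousAt_denom n)
      (aux_denom_zero_ne n)
  have h0 : Tendsto (fun α : ℝ =>
      α * Real.Gamma (((n:ℝ) - α)/2) /
        ((2:ℝ) ^ (α + 1) * π ^ ((n:ℝ)/2) * Real.Gamma (α/2 + 1))) (𝓝[>] (0:ℝ)) (𝓝 0) := by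
    have h1 := hc.tendsto
    simp only [zero_mul, zero_div] at h1
    exact h1.mono_left nhdsWithin_le_nhds
  refine h0.congr' ?_
  filter_upwards [Ioo_mem_nhdsGT_of_mem (by norm_num : (0:ℝ) ∈ Set.Ico (0:ℝ) 1)] with α hα
  exact (aux_one_div_riesz_eq hn hα).symm

lemma aux_G_riesz_eq (hn : 1 ≤ n) {t α : ℝ} (h : α ∈ Set.Ioo (0:ℝ) 1) :
    (n : ℝ) * (volume (ball (0 : EuclideanSpace ℝ (Fin n)) 1)).toReal * (t ^ α / α)
        / rieszGamma n α =
      2 * π ^ ((n:ℝ)/2) / Real.Gamma ((n:ℝ)/2) * t ^ α * Real.Gamma (((n:ℝ) - α)/2) /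
        ((2:ℝ) ^ (α + 1) * π ^ ((n:ℝ)/2) * Real.Gamma (α/2 + 1)) := by
  have h1 : (1:ℝ) ≤ n := by exact_mod_cast hn
  have hΓ1 : 0 < Real.Gamma (α/2) := Real.Gamma_pos_of_pos (by linarith [h.1])
  have hΓ2 : 0 < Real.Gamma (((n:ℝ) - α)/2) := Real.Gamma_pos_of_pos (by
    have := h.2; linarith)
  have h2 : (0:ℝ) < 2 ^ α := Real.rpow_pos_of_pos two_pos α
  have h3 : (0:ℝ) < π ^ ((n:ℝ)/2) := Real.rpow_pos_of_pos pi_pos _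
  have hα : 0 < α := h.1
  have hadd : Real.Gamma (α/2 + 1) = (α/2) * Real.Gamma (α/2) :=
    Real.Gamma_add_one (by positivity)
  have h2p : (2:ℝ) ^ (α + 1) = 2 ^ α * 2 := by
    rw [Real.rpow_add two_pos, Real.rpow_one]
  rw [aux_K_eq hn, rieszGamma, hadd, h2p]
  have hΓh : 0 < Real.Gamma ((n:ℝ)/2) := aux_gamma_half_pos hn
  field_simp

lemma aux_tendsto_G (hn : 1 ≤ n) {t : ℝ} (ht : 0 < t) :
    Tendsto (fun α : ℝ =>
      (n : ℝ) * (volume (ball (0 : EuclideanSpace ℝ (Fin n)) 1)).toReal * (t ^ α / α)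
        / rieszGamma n α) (𝓝[>] (0:ℝ)) (𝓝 1) := by
  have hΓh : 0 < Real.Gamma ((n:ℝ)/2) := aux_gamma_half_pos hn
  have h3 : (0:ℝ) < π ^ ((n:ℝ)/2) := Real.rpow_pos_of_pos pi_pos _
  have hc : ContinuousAt (fun α : ℝ =>
      2 * π ^ ((n:ℝ)/2) / Real.Gamma ((n:ℝ)/2) * t ^ α * Real.Gamma (((n:ℝ) - α)/2) /
        ((2:ℝ) ^ (α + 1) * π ^ ((n:ℝ)/2) * Real.Gamma (α/2 + 1))) 0 := by
    refine ContinuousAt.div ?_ (aux_continuousAt_denom n) (aux_denom_zero_ne n)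
    exact (continuousAt_const.mul (Real.continuousAt_const_rpow ht.ne')).mul
      (aux_continuousAt_gammafactor hn)
  have hval : 2 * π ^ ((n:ℝ)/2) / Real.Gamma ((n:ℝ)/2) * t ^ (0:ℝ) *
        Real.Gamma (((n:ℝ) - 0)/2) /
        ((2:ℝ) ^ ((0:ℝ) + 1) * π ^ ((n:ℝ)/2) * Real.Gamma ((0:ℝ)/2 + 1)) = 1 := by
    simp only [Real.rpow_zero, mul_one, sub_zero, zero_add, Real.rpow_one, zero_div,
      Real.Gamma_one]
    field_simp
  have h0 := hc.tendsto
  rw [hval] at h0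
  refine (h0.mono_left nhdsWithin_le_nhds).congr' ?_
  filter_upwards [Ioo_mem_nhdsGT_of_mem (by norm_num : (0:ℝ) ∈ Set.Ico (0:ℝ) 1)] with α hα
  exact (aux_G_riesz_eq hn hα).symm

end Aux

/-- Limiting property of parameter-dependent Riesz potentials on `ℝ^n`:
under local boundedness near `x`, a uniform integral bound away from `x`, and the
convergence `v(α,y) → v₀` as `(α,y) → (0,x)`, one has
`V_α(x) = (1/γ_n(α)) ∫ v(α,y) |x-y|^{α-n} dy → v₀` as `α → 0⁺`. -/
theorem riesz_potential_limit_parametric (n : ℕ) (hn : 1 ≤ n) (α₀ : ℝ)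
    (hα₀ : 0 < α₀) (hα₀' : α₀ < 1)
    (v : ℝ → EuclideanSpace ℝ (Fin n) → ℝ) (v₀ : ℝ) (x : EuclideanSpace ℝ (Fin n))
    (hmeas : Measurable ((Set.Ioc (0 : ℝ) α₀ ×ˢ (Set.univ : Set (EuclideanSpace ℝ (Fin n)))).restrict
      (Function.uncurry v)))
    (r : ℝ) (hr : 0 < r) (c₁ c₂ : ℝ) (hc₁ : 0 ≤ c₁) (hc₂ : 0 ≤ c₂)
    (hloc : ∀ α ∈ Set.Ioc (0 : ℝ) α₀, ∀ y ∈ closedBall x r, |v α y| ≤ c₁)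
    (hfar : ∀ α ∈ Set.Ioc (0 : ℝ) α₀,
      ∫⁻ y in (closedBall x r)ᶜ,
        ENNReal.ofReal (|v α y| * dist x y ^ ((2 : ℝ) - n)) ≤ ENNReal.ofReal c₂)
    (hlim : ∀ ε > (0 : ℝ), ∃ δ > (0 : ℝ), ∀ α ∈ Set.Ioc (0 : ℝ) α₀,
      ∀ y : EuclideanSpace ℝ (Fin n), α + dist y x < δ → |v α y - v₀| < ε) :
    Tendsto (fun α : ℝ =>
        (1 / rieszGamma n α) *
          ∫ y : EuclideanSpace ℝ (Fin n), v α y * dist x y ^ (α - n))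
      (nhdsWithin 0 (Set.Ioi (0 : ℝ))) (nhds v₀) := by
  have h1n : (1:ℝ) ≤ n := by exact_mod_cast hn
  set K : ℝ := (n:ℝ) * (volume (ball (0 : EuclideanSpace ℝ (Fin n)) 1)).toReal with hK_def
  rw [Metric.tendsto_nhds]
  intro ε hε
  set ε₁ : ℝ := ε/2 with hε₁_def
  have hε₁ : 0 < ε₁ := by positivity
  obtain ⟨δ₁, hδ₁pos, hδ₁⟩ := hlim ε₁ hε₁
  set s : ℝ := min (δ₁/2) r with hs_def
  have hs : 0 < s := lt_min (by positivity) hr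
  have hsr : s ≤ r := min_le_right _ _
  -- the dominating function
  set Φ : ℝ → ℝ := fun α =>
    ε₁ * ((1/rieszGamma n α) * (K * (s ^ α / α)))
      + |v₀| * |(1/rieszGamma n α) * (K * (s ^ α / α)) - 1|
      + c₁ * ((1/rieszGamma n α) * (K * (r ^ α / α)) - (1/rieszGamma n α) * (K * (s ^ α / α)))
      + (1/rieszGamma n α) * (r ^ (α - 2) * c₂) with hΦ_def
  -- Φ tends to ε₁ < ε
  have hT1 : Tendsto (fun α : ℝ => (1/rieszGamma n α) * (K * (s ^ α / α)))
      (𝓝[>] (0:ℝ)) (𝓝 1) :=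
    (aux_tendsto_G hn hs).congr (fun α => by rw [one_div, div_eq_inv_mul, hK_def])
  have hT2 : Tendsto (fun α : ℝ => (1/rieszGamma n α) * (K * (r ^ α / α)))
      (𝓝[>] (0:ℝ)) (𝓝 1) :=
    (aux_tendsto_G hn hr).congr (fun α => by rw [one_div, div_eq_inv_mul, hK_def])
  have hT4 : Tendsto (fun α : ℝ => r ^ (α - 2) * c₂) (𝓝[>] (0:ℝ))
      (𝓝 (r ^ ((0:ℝ) - 2) * c₂)) := by
    have hin : ContinuousAt (fun α : ℝ => α - 2) 0 :=
      (continuous_id.sub continuous_const).continuousAt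
    have hc : ContinuousAt (fun α : ℝ => r ^ (α - 2)) 0 := by
      simpa [Function.comp_def] using
        (Real.continuousAt_const_rpow (a := r) hr.ne').comp hin
    exact ((hc.mul continuousAt_const).tendsto).mono_left nhdsWithin_le_nhds
  have hΦlim : Tendsto Φ (𝓝[>] (0:ℝ)) (𝓝 ε₁) := by
    have : Tendsto Φ (𝓝[>] (0:ℝ))
        (𝓝 (ε₁ * 1 + |v₀| * |(1:ℝ) - 1| + c₁ * (1 - 1) + 0 * (r ^ ((0:ℝ) - 2) * c₂))) := by
      refine (((tendsto_const_nhds.mul hT1).add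
        (tendsto_const_nhds.mul ((hT1.sub tendsto_const_nhds).abs))).add
        (tendsto_const_nhds.mul (hT2.sub hT1))).add
        ((aux_tendsto_one_div_rieszGamma hn).mul hT4)
    simpa using this
  have hΦsmall : ∀ᶠ α in 𝓝[>] (0:ℝ), Φ α < ε :=
    hΦlim.eventually_lt_const (by linarith)
  -- the main eventual bound
  have hbound : ∀ᶠ α in 𝓝[>] (0:ℝ),
      |(1 / rieszGamma n α) * (∫ y : EuclideanSpace ℝ (Fin n), v α y * dist x y ^ (α - n)) - v₀|
        ≤ Φ α := by
    filter_upwards [Ioo_mem_nhdsGT_of_mem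
      (by constructor <;> [norm_num; exact lt_min hα₀ (by positivity)] :
        (0:ℝ) ∈ Set.Ico (0:ℝ) (min α₀ (δ₁/2)))] with α hα
    obtain ⟨hα0, hαm⟩ := hα
    have hαα₀ : α ≤ α₀ := le_of_lt (lt_of_lt_of_le hαm (min_le_left _ _))
    have hαδ : α < δ₁/2 := lt_of_lt_of_le hαm (min_le_right _ _)
    have hα1 : α < 1 := lt_of_le_of_lt hαα₀ hα₀'
    have hαIoc : α ∈ Set.Ioc (0:ℝ) α₀ := ⟨hα0, hαα₀⟩
    have hαIoo : α ∈ Set.Ioo (0:ℝ) 1 := ⟨hα0, hα1⟩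
    have hαn : α < (n:ℝ) := lt_of_lt_of_le hα1 h1n
    have hγ : 0 < rieszGamma n α := aux_rieszGamma_pos hn hαIoo
    have hγinv : 0 ≤ 1 / rieszGamma n α := by positivity
    -- measurability
    have measV : Measurable (v α) := by
      have he : Measurable (fun y : EuclideanSpace ℝ (Fin n) =>
          (⟨(α, y), Set.mem_prod.2 ⟨hαIoc, Set.mem_univ y⟩⟩ :
           (Set.Ioc (0:ℝ) α₀ ×ˢ (Set.univ : Set (EuclideanSpace ℝ (Fin n)))))) :=
        Measurable.subtype_mk (measurable_const.prodMk measurable_id)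
      exact hmeas.comp he
    have measW : Measurable (fun y : EuclideanSpace ℝ (Fin n) => dist x y ^ (α - (n:ℝ))) := by
      fun_prop
    have aesmVW : AEStronglyMeasurable
        (fun y : EuclideanSpace ℝ (Fin n) => v α y * dist x y ^ (α - (n:ℝ))) volume :=
      (measV.mul measW).aestronglyMeasurable
    have hWnonneg : ∀ y : EuclideanSpace ℝ (Fin n), 0 ≤ dist x y ^ (α - (n:ℝ)) :=
      fun y => Real.rpow_nonneg dist_nonneg _
    -- integrability of the weight
    have intW_s : IntegrableOn (fun y => dist x y ^ (α - (n:ℝ))) (closedBall x s) volume :=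
      aux_ball_weight_integrableOn hn x hα0 hαn hs
    have intW_r : IntegrableOn (fun y => dist x y ^ (α - (n:ℝ))) (closedBall x r) volume :=
      aux_ball_weight_integrableOn hn x hα0 hαn hr
    have intW_diff : IntegrableOn (fun y => dist x y ^ (α - (n:ℝ)))
        (closedBall x r \ closedBall x s) volume := intW_r.mono_set Set.diff_subset
    -- integrability of v * W on the ball
    have intVW_r : IntegrableOn (fun y => v α y * dist x y ^ (α - (n:ℝ)))
        (closedBall x r) volume := by
      refine Integrable.mono' (intW_r.const_mul c₁) aesmVW.restrict ?_
      filter_upwards [ae_restrict_mem measurableSet_closedBall] with y hy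
      rw [Real.norm_eq_abs, abs_mul, abs_of_nonneg (hWnonneg y)]
      exact mul_le_mul_of_nonneg_right (hloc α hαIoc y hy) (hWnonneg y)
    have intVW_s : IntegrableOn (fun y => v α y * dist x y ^ (α - (n:ℝ)))
        (closedBall x s) volume := intVW_r.mono_set (closedBall_subset_closedBall hsr)
    have intVW_diff : IntegrableOn (fun y => v α y * dist x y ^ (α - (n:ℝ)))
        (closedBall x r \ closedBall x s) volume := intVW_r.mono_set Set.diff_subset
    -- the lintegral bound outside the ball
    have hlint : ∫⁻ y in (closedBall x r)ᶜ,
        ENNReal.ofReal ‖v α y * dist x y ^ (α - (n:ℝ))‖ ≤ ENNReal.ofReal (r ^ (α-2) * c₂) := by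
      calc ∫⁻ y in (closedBall x r)ᶜ, ENNReal.ofReal ‖v α y * dist x y ^ (α - (n:ℝ))‖
          ≤ ∫⁻ y in (closedBall x r)ᶜ, ENNReal.ofReal (r ^ (α-2)) *
              ENNReal.ofReal (|v α y| * dist x y ^ ((2:ℝ) - n)) := by
            refine lintegral_mono_ae ?_
            filter_upwards [ae_restrict_mem measurableSet_closedBall.compl] with y hy
            have hd : r < dist y x := by
              by_contra hcon
              exact hy (mem_closedBall.2 (not_lt.1 hcon))
            have hdx : r < dist x y := by rwa [dist_comm]
            have hd0 : 0 < dist x y := lt_trans hr hdx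
            rw [← ENNReal.ofReal_mul (by positivity)]
            apply ENNReal.ofReal_le_ofReal
            rw [Real.norm_eq_abs, abs_mul, abs_of_nonneg (hWnonneg y)]
            have hsplit : dist x y ^ (α - (n:ℝ)) =
                dist x y ^ ((2:ℝ) - n) * dist x y ^ (α - 2) := by
              rw [← Real.rpow_add hd0]
              congr 1
              ring
            rw [hsplit]
            calc |v α y| * (dist x y ^ ((2:ℝ) - n) * dist x y ^ (α - 2))
                ≤ |v α y| * (dist x y ^ ((2:ℝ) - n) * r ^ (α - 2)) := by
                  refine mul_le_mul_of_nonneg_left ?_ (abs_nonneg _)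
                  refine mul_le_mul_of_nonneg_left ?_ (Real.rpow_nonneg dist_nonneg _)
                  exact Real.rpow_le_rpow_of_nonpos hr hdx.le (by linarith)
              _ = r ^ (α-2) * (|v α y| * dist x y ^ ((2:ℝ) - n)) := by ring
        _ = ENNReal.ofReal (r ^ (α-2)) * ∫⁻ y in (closedBall x r)ᶜ,
              ENNReal.ofReal (|v α y| * dist x y ^ ((2:ℝ) - n)) :=
            lintegral_const_mul' _ _ ENNReal.ofReal_ne_top
        _ ≤ ENNReal.ofReal (r ^ (α-2)) * ENNReal.ofReal c₂ :=
            mul_le_mul_right (hfar α hαIoc) _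
        _ = ENNReal.ofReal (r ^ (α-2) * c₂) := (ENNReal.ofReal_mul (by positivity)).symm
    have intVW_c : IntegrableOn (fun y => v α y * dist x y ^ (α - (n:ℝ)))
        (closedBall x r)ᶜ volume := by
      refine ⟨aesmVW.restrict, ?_⟩
      rw [← hasFiniteIntegral_norm_iff,
        hasFiniteIntegral_iff_ofReal (ae_of_all _ fun y => norm_nonneg _)]
      exact lt_of_le_of_lt hlint ENNReal.ofReal_lt_top
    have intVW : Integrable (fun y => v α y * dist x y ^ (α - (n:ℝ))) volume := by
      rw [← integrableOn_univ, ← Set.union_compl_self (closedBall x r)]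
      exact intVW_r.union intVW_c
    -- integral values for the weight
    have hIW_s : ∫ y in closedBall x s, dist x y ^ (α - (n:ℝ)) = K * (s ^ α / α) :=
      aux_ball_weight_integral hn x hα0 hαn hs
    have hIW_r : ∫ y in closedBall x r, dist x y ^ (α - (n:ℝ)) = K * (r ^ α / α) :=
      aux_ball_weight_integral hn x hα0 hαn hr
    -- names for the pieces
    set A : ℝ := ∫ y in closedBall x s,
      (v α y * dist x y ^ (α - (n:ℝ)) - v₀ * dist x y ^ (α - (n:ℝ))) with hA_def
    set C : ℝ := ∫ y in closedBall x r \ closedBall x s,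
      v α y * dist x y ^ (α - (n:ℝ)) with hC_def
    set D : ℝ := ∫ y in (closedBall x r)ᶜ,
      v α y * dist x y ^ (α - (n:ℝ)) with hD_def
    -- splitting the integral
    have hsplitBs : ∫ y in closedBall x s, v α y * dist x y ^ (α - (n:ℝ))
        = A + v₀ * (K * (s ^ α / α)) := by
      have h1 : A = (∫ y in closedBall x s, v α y * dist x y ^ (α - (n:ℝ)))
          - ∫ y in closedBall x s, v₀ * dist x y ^ (α - (n:ℝ)) := by
        rw [hA_def]
        exact integral_sub intVW_s (intW_s.const_mul v₀)
      have h2 : ∫ y in closedBall x s, v₀ * dist x y ^ (α - (n:ℝ))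
          = v₀ * (K * (s ^ α / α)) := by
        rw [integral_const_mul, hIW_s]
      rw [h2] at h1
      linarith
    have hsplitDiff : ∫ y in closedBall x r \ closedBall x s,
          v α y * dist x y ^ (α - (n:ℝ))
        = (∫ y in closedBall x r, v α y * dist x y ^ (α - (n:ℝ)))
          - ∫ y in closedBall x s, v α y * dist x y ^ (α - (n:ℝ)) :=
      integral_diff measurableSet_closedBall intVW_r (closedBall_subset_closedBall hsr)
    have htotal : ∫ y : EuclideanSpace ℝ (Fin n), v α y * dist x y ^ (α - (n:ℝ))
        = (A + v₀ * (K * (s ^ α / α))) + C + D := by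
      have h1 : ∫ y : EuclideanSpace ℝ (Fin n), v α y * dist x y ^ (α - (n:ℝ))
          = (∫ y in closedBall x r, v α y * dist x y ^ (α - (n:ℝ)))
            + ∫ y in (closedBall x r)ᶜ, v α y * dist x y ^ (α - (n:ℝ)) :=
        (integral_add_compl measurableSet_closedBall intVW).symm
      rw [h1, ← hD_def, ← hsplitBs, hC_def, hsplitDiff]
      ring
    -- bounds on the pieces
    have hA_bound : |A| ≤ ε₁ * (K * (s ^ α / α)) := by
      have h1 : ‖A‖ ≤ ∫ y in closedBall x s,
          ‖v α y * dist x y ^ (α - (n:ℝ)) - v₀ * dist x y ^ (α - (n:ℝ))‖ :=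
        norm_integral_le_integral_norm _
      rw [Real.norm_eq_abs] at h1
      have h2 : ∫ y in closedBall x s,
            ‖v α y * dist x y ^ (α - (n:ℝ)) - v₀ * dist x y ^ (α - (n:ℝ))‖
          ≤ ∫ y in closedBall x s, ε₁ * dist x y ^ (α - (n:ℝ)) := by
        refine setIntegral_mono_on ((intVW_s.sub (intW_s.const_mul v₀)).norm)
          (intW_s.const_mul ε₁) measurableSet_closedBall ?_
        intro y hy
        rw [Real.norm_eq_abs, ← sub_mul, abs_mul, abs_of_nonneg (hWnonneg y)]
        refine mul_le_mul_of_nonneg_right (le_of_lt ?_) (hWnonneg y)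
        refine hδ₁ α hαIoc y ?_
        have hys : dist y x ≤ s := mem_closedBall.1 hy
        have hs2 : s ≤ δ₁/2 := min_le_left _ _
        linarith
      have h3 : ∫ y in closedBall x s, ε₁ * dist x y ^ (α - (n:ℝ))
          = ε₁ * (K * (s ^ α / α)) := by rw [integral_const_mul, hIW_s]
      linarith
    have hC_bound : |C| ≤ c₁ * (K * (r ^ α / α) - K * (s ^ α / α)) := by
      have h1 : ‖C‖ ≤ ∫ y in closedBall x r \ closedBall x s,
          ‖v α y * dist x y ^ (α - (n:ℝ))‖ := norm_integral_le_integral_norm _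
      rw [Real.norm_eq_abs] at h1
      have h2 : ∫ y in closedBall x r \ closedBall x s,
            ‖v α y * dist x y ^ (α - (n:ℝ))‖
          ≤ ∫ y in closedBall x r \ closedBall x s, c₁ * dist x y ^ (α - (n:ℝ)) := by
        refine setIntegral_mono_on intVW_diff.norm (intW_diff.const_mul c₁)
          (measurableSet_closedBall.diff measurableSet_closedBall) ?_
        intro y hy
        rw [Real.norm_eq_abs, abs_mul, abs_of_nonneg (hWnonneg y)]
        exact mul_le_mul_of_nonneg_right (hloc α hαIoc y hy.1) (hWnonneg y)
      have h3 : ∫ y in closedBall x r \ closedBall x s, c₁ * dist x y ^ (α - (n:ℝ))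
          = c₁ * (K * (r ^ α / α) - K * (s ^ α / α)) := by
        rw [integral_const_mul,
          integral_diff measurableSet_closedBall intW_r (closedBall_subset_closedBall hsr),
          hIW_r, hIW_s]
      linarith
    have hD_bound : |D| ≤ r ^ (α-2) * c₂ := by
      have h1 : ‖D‖ ≤ (∫⁻ y in (closedBall x r)ᶜ,
          ENNReal.ofReal ‖v α y * dist x y ^ (α - (n:ℝ))‖).toReal :=
        norm_integral_le_lintegral_norm _
      rw [Real.norm_eq_abs] at h1
      refine le_trans h1 ?_
      have h2 := ENNReal.toReal_mono ENNReal.ofReal_ne_top hlint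
      rw [ENNReal.toReal_ofReal (by positivity)] at h2
      exact h2
    -- final assembly
    have key : (1 / rieszGamma n α) *
          (∫ y : EuclideanSpace ℝ (Fin n), v α y * dist x y ^ (α - (n:ℝ))) - v₀
        = (1/rieszGamma n α) * A
          + v₀ * ((1/rieszGamma n α) * (K * (s ^ α / α)) - 1)
          + (1/rieszGamma n α) * C
          + (1/rieszGamma n α) * D := by
      rw [htotal]; ring
    have habs : |(1 / rieszGamma n α) *
          (∫ y : EuclideanSpace ℝ (Fin n), v α y * dist x y ^ (α - (n:ℝ))) - v₀|
        ≤ |(1/rieszGamma n α) * A|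
          + |v₀ * ((1/rieszGamma n α) * (K * (s ^ α / α)) - 1)|
          + |(1/rieszGamma n α) * C|
          + |(1/rieszGamma n α) * D| := by
      rw [key]
      exact (abs_add_le _ _).trans (add_le_add ((abs_add_le _ _).trans
        (add_le_add (abs_add_le _ _) le_rfl)) le_rfl)
    rw [abs_mul, abs_mul, abs_mul, abs_mul, abs_of_pos (by positivity : 0 < 1/rieszGamma n α)]
      at habs
    have t1 : (1/rieszGamma n α) * |A| ≤ ε₁ * ((1/rieszGamma n α) * (K * (s ^ α / α))) := by
      have := mul_le_mul_of_nonneg_left hA_bound hγinv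
      linarith
    have t3 : (1/rieszGamma n α) * |C| ≤
        c₁ * ((1/rieszGamma n α) * (K * (r ^ α / α)) - (1/rieszGamma n α) * (K * (s ^ α / α))) := by
      have := mul_le_mul_of_nonneg_left hC_bound hγinv
      have heq : (1/rieszGamma n α) * (c₁ * (K * (r ^ α / α) - K * (s ^ α / α)))
          = c₁ * ((1/rieszGamma n α) * (K * (r ^ α / α))
            - (1/rieszGamma n α) * (K * (s ^ α / α))) := by ring
      linarith [heq ▸ this]
    have t4 : (1/rieszGamma n α) * |D| ≤ (1/rieszGamma n α) * (r ^ (α-2) * c₂) :=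
      mul_le_mul_of_nonneg_left hD_bound hγinv
    rw [hΦ_def]
    simp only []
    linarith
  -- conclude
  filter_upwards [hbound, hΦsmall] with α h1 h2
  rw [Real.dist_eq]
  exact lt_of_le_of_lt h1 h2


end
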